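/- Let G: ℝᵐ → ℝ^{m×m} be a continuous positive-definite matrix field along a parametric curve family, φ: [0,1] → ℝ^B continuous with φ₁,…,φ_B linearly independent. Then for every w, the quadratic form dw ↦ Σ_{i,k=1}^n Σ_{j,l=1}^B h_{ijkl}(w) dw^{ij} dw^{kl}, where h_{ijkl}(w) = ∫₀¹ φⱼ(τ) g_{ik}(q(τ;w)) φ_l(τ) dτ, is positive definite on ℝ^{n×B}. -/

import Mathlib

open Set Matrix

/-!
Writing `v τ = dw *ᵥ φ τ` for the velocity of the variation, the form equals
`∫₀¹ v ⬝ᵥ G(q(τ; w)) *ᵥ v dτ`. The integrand is continuous and nonnegative by positive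
definiteness of `G`, and it is positive at some `τ` because a row of `dw` that is nonzero
cannot annihilate the linearly independent `φ` on all of `[0, 1]`.
-/

lemma sum_mul_eq_dotProduct_mulVec {R m β : Type*} [CommSemiring R] [Fintype m] [Fintype β]
    (M : Matrix m m R) (u : β → R) (dw : Matrix m β R) :
    ∑ i, ∑ k, ∑ j, ∑ l, u j * M i k * u l * dw i j * dw k l = (dw *ᵥ u) ⬝ᵥ M *ᵥ (dw *ᵥ u) := by
  simp only [dotProduct, mulVec, Finset.mul_sum, Finset.sum_mul]
  refine Finset.sum_congr rfl fun i _ => Finset.sum_congr rfl fun k _ => ?_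
  rw [Finset.sum_comm]
  refine Finset.sum_congr rfl fun j _ => Finset.sum_congr rfl fun l _ => ?_
  ring

lemma exists_mulVec_ne_zero {α R m β : Type*} [Semiring R] [Fintype β] {S : Set α}
    {φ : α → β → R} (hli : ∀ a : β → R, (∀ τ ∈ S, ∑ j, a j * φ τ j = 0) → a = 0)
    {dw : Matrix m β R} (hdw : dw ≠ 0) : ∃ τ ∈ S, dw *ᵥ φ τ ≠ 0 := by
  obtain ⟨i, hi⟩ : ∃ i, dw i ≠ 0 := by
    by_contra! h
    exact hdw (funext h)
  by_contra! h
  exact hi (hli (dw i) fun τ hτ => congrFun (h τ hτ) i)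

lemma sum_integral_mul_eq_integral_dotProduct_mulVec {m β : Type*} [Fintype m] [Fintype β]
    {a b : ℝ} (hab : a ≤ b) {M : ℝ → Matrix m m ℝ} {u : ℝ → β → ℝ}
    (hM : ContinuousOn M (Icc a b)) (hu : ContinuousOn u (Icc a b)) (dw : Matrix m β ℝ) :
    ∑ i, ∑ k, ∑ j, ∑ l, (∫ τ in a..b, u τ j * M τ i k * u τ l) * dw i j * dw k l =
      ∫ τ in a..b, (dw *ᵥ u τ) ⬝ᵥ M τ *ᵥ (dw *ᵥ u τ) := by
  simp_rw [← sum_mul_eq_dotProduct_mulVec, ← intervalIntegral.integral_mul_const]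
  -- over the product index type a single exchange of sum and integral suffices
  simp only [← Fintype.sum_prod_type']
  rw [intervalIntegral.integral_finsetSum]
  intro x _
  apply ContinuousOn.intervalIntegrable_of_Icc hab
  have hu' := fun j => continuousOn_pi.1 hu j
  have hM' := fun i k => continuousOn_pi.1 (continuousOn_pi.1 hM i) k
  fun_prop

/-- For a continuous positive-definite metric field G and continuous,
linearly independent basis functions φ₁,…,φ_B on [0,1], the CurveGeom quadratic
form dw ↦ Σ_{ijkl} h_{ijkl}(w) dw^{ij} dw^{kl}, with
h_{ijkl}(w) = ∫₀¹ φⱼ(τ) g_{ik}(q(τ;w)) φ_l(τ) dτ, is positive definite on ℝ^{n×B}. -/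
theorem stmt_11 (n B : ℕ) (ψ : ℝ → (Fin n → ℝ)) (φ : ℝ → (Fin B → ℝ))
    (hψ : ContinuousOn ψ (Icc (0:ℝ) 1)) (hφ : ContinuousOn φ (Icc (0:ℝ) 1))
    (hli : ∀ a : Fin B → ℝ, (∀ τ ∈ Icc (0:ℝ) 1, ∑ i, a i * φ τ i = 0) → a = 0)
    (G : (Fin n → ℝ) → Matrix (Fin n) (Fin n) ℝ)
    (hGcont : Continuous G) (hGpd : ∀ x, (G x).PosDef)
    (q : ℝ → Matrix (Fin n) (Fin B) ℝ → (Fin n → ℝ))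
    (hq : ∀ τ w, q τ w = ψ τ + w.mulVec (φ τ)) :
    ∀ (w dw : Matrix (Fin n) (Fin B) ℝ), dw ≠ 0 →
      0 < ∑ i : Fin n, ∑ k : Fin n, ∑ j : Fin B, ∑ l : Fin B,
        (∫ τ in (0:ℝ)..1, φ τ j * (G (q τ w)) i k * φ τ l) * dw i j * dw k l := by
  intro w dw hdw
  have hmulVec : ∀ A : Matrix (Fin n) (Fin B) ℝ, ContinuousOn (fun τ => A *ᵥ φ τ) (Icc 0 1) :=
    fun A => (continuous_const.matrix_mulVec continuous_id).comp_continuousOn hφ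
  have hG : ContinuousOn (fun τ => G (q τ w)) (Icc 0 1) := by
    simp only [hq]
    exact hGcont.comp_continuousOn (hψ.add (hmulVec w))
  rw [sum_integral_mul_eq_integral_dotProduct_mulVec zero_le_one hG hφ]
  obtain ⟨τ₀, hτ₀, hv⟩ := exists_mulVec_ne_zero hli hdw
  refine intervalIntegral.integral_pos zero_lt_one ?_ ?_ ⟨τ₀, hτ₀, (hGpd _).dotProduct_mulVec_pos hv⟩
  · exact (continuous_snd.dotProduct (continuous_fst.matrix_mulVec continuous_snd)).comp_continuousOn
      (hG.prodMk (hmulVec dw))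
  · exact fun τ _ => (hGpd _).posSemidef.dotProduct_mulVec_nonneg _
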